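/- arXiv:2210.03805 — 2 statements merged into one kernel-verified Lean document; each statement's English description precedes it below -/
import Mathlib

section
/- Counting heavy subspaces. Let 2 ≤ m ≤ d−1, let ε > 0, and let ν be a Borel probability measure on ℝP^{d−1} such that ν([L]) ≤ ε/4 for every L ∈ Gr(m−1,d). Then the set of subspaces L' ∈ Gr(m,d) with ν([L']) ≥ ε/2 is finite and contains at most N = ⌊2^{2m−1}/ε^m⌋ elements. -/
open MeasureTheory Matrix Filter
open scoped ENNReal

noncomputable section

/-- `SL(d, ℝ)`. -/
abbrev SL (d : ℕ) := Matrix.SpecialLinearGroup (Fin d) ℝ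

instance (d : ℕ) : TopologicalSpace (SL d) :=
  inferInstanceAs (TopologicalSpace { A : Matrix (Fin d) (Fin d) ℝ // A.det = 1 })

instance (d : ℕ) : MeasurableSpace (SL d) := borel _
instance (d : ℕ) : BorelSpace (SL d) := ⟨rfl⟩

/-- Operator norm of a real `d × d` matrix, acting on Euclidean space. -/
def opNorm {d : ℕ} (A : Matrix (Fin d) (Fin d) ℝ) : ℝ :=
  ‖Matrix.toEuclideanCLM (𝕜 := ℝ) A‖

/-- The norm `‖A‖` of `A ∈ SL(d, ℝ)`. -/
def slNorm {d : ℕ} (A : SL d) : ℝ := opNorm (A : Matrix (Fin d) (Fin d) ℝ)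

/-- `A` applied to a vector `v ∈ ℝ^d` (with the Euclidean norm). -/
def slVec {d : ℕ} (A : SL d) (v : EuclideanSpace ℝ (Fin d)) : EuclideanSpace ℝ (Fin d) :=
  Matrix.toEuclideanCLM (𝕜 := ℝ) (A : Matrix (Fin d) (Fin d) ℝ) v

/-- The random (reversed) product `Tₙ = Aₙ ⋯ A₂ A₁`, where `Aᵢ = ω (i-1)`. -/
def T {d : ℕ} (ω : ℕ → SL d) : ℕ → SL d
  | 0 => 1
  | n + 1 => ω n * T ω n

/-- The projective space `ℝP^{d-1}`. -/
abbrev Proj (d : ℕ) := Projectivization ℝ (Fin d → ℝ)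

instance (d : ℕ) : TopologicalSpace (Proj d) :=
  inferInstanceAs (TopologicalSpace (Quotient (projectivizationSetoid ℝ (Fin d → ℝ))))

instance (d : ℕ) : MeasurableSpace (Proj d) := borel _
instance (d : ℕ) : BorelSpace (Proj d) := ⟨rfl⟩

/-- The linear map induced by `A ∈ SL(d, ℝ)` is injective. -/
theorem toLin'_injective {d : ℕ} (A : SL d) :
    Function.Injective (Matrix.toLin' (A : Matrix (Fin d) (Fin d) ℝ)) := by
  apply Function.LeftInverse.injective
    (g := Matrix.toLin' ((A⁻¹ : SL d) : Matrix (Fin d) (Fin d) ℝ))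
  intro x
  rw [← Matrix.toLin'_mul_apply, ← Matrix.SpecialLinearGroup.coe_mul, inv_mul_cancel,
    Matrix.SpecialLinearGroup.coe_one, Matrix.toLin'_one, LinearMap.id_apply]

/-- The projective map `f_A : ℝP^{d-1} → ℝP^{d-1}` induced by `A ∈ SL(d, ℝ)`. -/
def projMap {d : ℕ} (A : SL d) : Proj d → Proj d :=
  Projectivization.map (Matrix.toLin' (A : Matrix (Fin d) (Fin d) ℝ)) (toLin'_injective A)

/-- The subset `[L] ⊆ ℝP^{d-1}` corresponding to a linear subspace `L ≤ ℝ^d`. -/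
def projSet {d : ℕ} (L : Submodule ℝ (Fin d → ℝ)) : Set (Proj d) :=
  {x : Proj d | x.submodule ≤ L}

/-- Finite moment condition for a single measure, with exponent `γ` and bound `C`. -/
def FiniteMomentCondition {d : ℕ} (γ C : ℝ) (μ : ProbabilityMeasure (SL d)) : Prop :=
  ∫⁻ A, ENNReal.ofReal (slNorm A ^ γ) ∂(μ : Measure (SL d)) < ENNReal.ofReal C

/-- Log-moment condition: `∫ log ‖A‖ dμ(A) < ∞`. -/
def LogMomentCondition {d : ℕ} (μ : ProbabilityMeasure (SL d)) : Prop :=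
  ∫⁻ A, ENNReal.ofReal (Real.log (slNorm A)) ∂(μ : Measure (SL d)) < ⊤

/-- Measures condition: there are no Borel probability measures `ν₁`, `ν₂` on `ℝP^{d-1}`
with `(f_A)_* ν₁ = ν₂` for `μ`-a.e. `A`. -/
def MeasuresCondition {d : ℕ} (μ : ProbabilityMeasure (SL d)) : Prop :=
  ¬ ∃ (ν₁ ν₂ : ProbabilityMeasure (Proj d)),
      ∀ᵐ A ∂(μ : Measure (SL d)),
        (ν₁ : Measure (Proj d)).map (projMap A) = (ν₂ : Measure (Proj d))

/-- `U ⊆ ℝ^d` is a (nonempty) finite union of proper nonzero linear subspaces. -/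
def IsFiniteUnionOfProperSubspaces {d : ℕ} (U : Set (Fin d → ℝ)) : Prop :=
  ∃ S : Set (Submodule ℝ (Fin d → ℝ)), S.Finite ∧ S.Nonempty ∧
    (∀ W ∈ S, W ≠ ⊥ ∧ W ≠ ⊤) ∧ U = ⋃ W ∈ S, (W : Set (Fin d → ℝ))

/-- `U ⊆ ℝ^d` is a (nonempty) finite union of `j`-dimensional linear subspaces. -/
def IsFiniteUnionOfDimSubspaces {d : ℕ} (j : ℕ) (U : Set (Fin d → ℝ)) : Prop :=
  ∃ S : Set (Submodule ℝ (Fin d → ℝ)), S.Finite ∧ S.Nonempty ∧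
    (∀ W ∈ S, Module.finrank ℝ W = j) ∧ U = ⋃ W ∈ S, (W : Set (Fin d → ℝ))

/-- Spaces condition: there are no two finite unions `U`, `U'` of proper nonzero subspaces
of `ℝ^d` such that `A(U) = U'` for `μ`-a.e. `A`. -/
def SpacesCondition {d : ℕ} (μ : ProbabilityMeasure (SL d)) : Prop :=
  ¬ ∃ U U' : Set (Fin d → ℝ), IsFiniteUnionOfProperSubspaces U ∧
      IsFiniteUnionOfProperSubspaces U' ∧
      ∀ᵐ (A : SL d) ∂(μ : Measure (SL d)),
        (fun v => Matrix.toLin' (A : Matrix (Fin d) (Fin d) ℝ) v) '' U = U'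

/-- `ℙ` is the product measure `μ₁ × μ₂ × ⋯` on sequences, characterized by its
finite-dimensional marginals. -/
def IsProductMeasure {d : ℕ} (μ : ℕ → ProbabilityMeasure (SL d))
    (ℙ : Measure (ℕ → SL d)) : Prop :=
  IsProbabilityMeasure ℙ ∧
    ∀ n : ℕ, ℙ.map (fun ω (i : Fin n) => ω i) =
      Measure.pi (fun i : Fin n => ((μ i : Measure (SL d))))

/-- `Lₙ = E log ‖Tₙ‖`. -/
def L {d : ℕ} (ℙ : Measure (ℕ → SL d)) (n : ℕ) : ℝ :=
  ∫ ω, Real.log (slNorm (T ω n)) ∂ℙ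

/-- `L_{[n,m]} = E log ‖A_m ⋯ A_{n+1}‖`. -/
def Lseg {d : ℕ} (ℙ : Measure (ℕ → SL d)) (n m : ℕ) : ℝ :=
  ∫ ω, Real.log (slNorm (T ω m * (T ω n)⁻¹)) ∂ℙ


/-!
For a heavy `L ∈ Gr(m, d)`, consider the `m`-tuples of projectively independent points of `[L]`;
such a tuple spans `L`, so these sets of tuples are disjoint for distinct `L`. Under `ν^m` each has
measure at least `(ε/2)(ε/4)^(m-1)`: the first point lies in `[L]` with probability `≥ ε/2`, and
once `j ≥ 1` independent points of `[L]` are chosen, their span `W ⊊ L` lies in some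
`(m-1)`-dimensional subspace, so the next point lies in `[L] \ [W]` with probability
`≥ ε/2 - ε/4`. Hence there are at most `1 / ((ε/2)(ε/4)^(m-1)) = 2^(2m-1)/ε^m` heavy subspaces.
-/

open Set Module MeasureTheory Topology
open scoped LinearAlgebra.Projectivization

theorem Submodule.exists_finrank_eq_of_le {K V : Type*} [DivisionRing K] [AddCommGroup V]
    [Module K V] [FiniteDimensional K V] {W L : Submodule K V} (hWL : W ≤ L) {j : ℕ}
    (hWj : finrank K W ≤ j) (hjL : j ≤ finrank K L) :
    ∃ W' : Submodule K V, W ≤ W' ∧ W' ≤ L ∧ finrank K W' = j := by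
  induction j, hWj using Nat.le_induction with
  | base => exact ⟨W, le_rfl, hWL, rfl⟩
  | succ j _ ih =>
    obtain ⟨W', hWW', hW'L, hW'⟩ := ih (by omega)
    have hlt : W' < L := lt_of_le_of_ne hW'L (by rintro rfl; omega)
    obtain ⟨v, hvL, hvW'⟩ := SetLike.exists_of_lt hlt
    refine ⟨W' ⊔ K ∙ v, le_sup_of_le_left hWW', sup_le hW'L ?_, ?_⟩
    · exact (Submodule.span_singleton_le_iff_mem v L).2 hvL
    · rw [finrank_sup_span_singleton hvW', hW']

namespace Projectivization

variable {K V : Type*} [DivisionRing K] [AddCommGroup V] [Module K V]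

theorem submodule_le_iff_rep_mem (x : ℙ K V) (W : Submodule K V) :
    x.submodule ≤ W ↔ x.rep ∈ W := by
  rw [submodule_eq, Submodule.span_singleton_le_iff_mem]

theorem iSup_submodule_eq_span {ι : Type*} (f : ι → ℙ K V) :
    ⨆ i, (f i).submodule = Submodule.span K (range (Projectivization.rep ∘ f)) := by
  simp only [submodule_eq, Submodule.span_range_eq_iSup, Function.comp_apply]

theorem Independent.finrank_iSup_submodule {ι : Type*} [Fintype ι] {f : ι → ℙ K V}
    (hf : Independent f) :
    finrank K (⨆ i, (f i).submodule : Submodule K V) = Fintype.card ι := by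
  rw [iSup_submodule_eq_span, finrank_span_eq_card (independent_iff.1 hf)]

theorem independent_snoc_iff {n : ℕ} {f : Fin n → ℙ K V} {x : ℙ K V} :
    Independent (Fin.snoc f x : Fin (n + 1) → ℙ K V) ↔
      Independent f ∧ ¬ x.submodule ≤ ⨆ i, (f i).submodule := by
  rw [independent_iff, independent_iff, Fin.comp_snoc, linearIndependent_finSnoc,
    iSup_submodule_eq_span, submodule_le_iff_rep_mem]

theorem independent_mk_iff {ι : Type*} {f : ι → V} (hf : ∀ i, f i ≠ 0) :
    Independent (fun i => mk K (f i) (hf i)) ↔ LinearIndependent K f := by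
  simp only [independent_iff_iSupIndep, submodule_mk]
  exact iSupIndep_iff_linearIndependent_of_ne_zero hf

theorem independent_of_isEmpty {ι : Type*} [IsEmpty ι] (f : ι → ℙ K V) : Independent f :=
  independent_iff.2 linearIndependent_empty_type

end Projectivization

theorem MeasureTheory.Measure.mul_pi_le_pi_of_le_snoc {X : Type*} [MeasurableSpace X]
    (ν : Measure X) [SigmaFinite ν] {n : ℕ} {S : Set (Fin (n + 1) → X)}
    (hS : MeasurableSet S) {T : Set (Fin n → X)} (hT : MeasurableSet T) {c : ℝ≥0∞}
    (hc : ∀ y ∈ T, c ≤ ν {t | Fin.snoc y t ∈ S}) :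
    c * Measure.pi (fun _ => ν) T ≤ Measure.pi (fun _ => ν) S := by
  let e := MeasurableEquiv.piFinSuccAbove (fun _ : Fin (n + 1) => X) (Fin.last n)
  have he : MeasurePreserving e.symm (ν.prod (Measure.pi fun _ => ν)) (Measure.pi fun _ => ν) :=
    (measurePreserving_piFinSuccAbove (fun _ => ν) (Fin.last n)).symm
  have hsnoc : ∀ t y, e.symm (t, y) = Fin.snoc y t := fun t y => Fin.insertNth_last' t y
  rw [← he.measure_preimage hS.nullMeasurableSet,
    Measure.prod_apply_symm (hS.preimage e.symm.measurable), ← lintegral_indicator_const hT]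
  refine lintegral_mono fun y => ?_
  by_cases hy : y ∈ T
  · rw [indicator_of_mem hy]
    convert hc y hy using 2
    ext t
    simp only [mem_preimage, mem_ofPred_eq, hsnoc]
  · simp [indicator_of_notMem hy]

section PairwiseDisjoint

variable {α ι : Type*} [MeasurableSpace α] {μ : Measure α} {S : Set ι} {A : ι → Set α}
  {c : ℝ≥0∞}

theorem Set.PairwiseDisjoint.finite_of_le_measure [IsFiniteMeasure μ]
    (hdisj : S.PairwiseDisjoint A) (hA : ∀ i ∈ S, MeasurableSet (A i)) (hc0 : c ≠ 0)
    (hc : ∀ i ∈ S, c ≤ μ (A i)) : S.Finite := by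
  have hfin := Measure.finite_const_le_meas_of_disjoint_iUnion μ (pos_iff_ne_zero.2 hc0)
    (As := fun i : S => A i) (fun i => hA i i.2)
    (fun i j hij => hdisj i.2 j.2 (Subtype.coe_injective.ne hij)) (measure_ne_top _ _)
  have huniv : {i : S | c ≤ μ (A i)} = univ := eq_univ_of_forall fun i => hc i i.2
  rw [huniv, finite_univ_iff] at hfin
  exact finite_coe_iff.1 hfin

theorem Set.PairwiseDisjoint.ncard_mul_le_measure_univ (hS : S.Finite)
    (hdisj : S.PairwiseDisjoint A) (hA : ∀ i ∈ S, MeasurableSet (A i))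
    (hc : ∀ i ∈ S, c ≤ μ (A i)) : S.ncard * c ≤ μ univ := by
  rw [← hS.coe_toFinset] at hdisj
  calc (S.ncard : ℝ≥0∞) * c = ∑ _i ∈ hS.toFinset, c := by
        rw [Finset.sum_const, nsmul_eq_mul, ncard_eq_toFinset_card S hS]
    _ ≤ ∑ i ∈ hS.toFinset, μ (A i) :=
        Finset.sum_le_sum fun i hi => hc i (hS.mem_toFinset.1 hi)
    _ = μ (⋃ i ∈ hS.toFinset, A i) :=
        (measure_biUnion_finset hdisj fun i hi => hA i (hS.mem_toFinset.1 hi)).symm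
    _ ≤ μ univ := measure_mono (subset_univ _)

end PairwiseDisjoint

namespace Proj

variable {d : ℕ}

open Projectivization

theorem isQuotientMap_mk' :
    IsQuotientMap (mk' ℝ : {v : Fin d → ℝ // v ≠ 0} → Proj d) :=
  isQuotientMap_quotient_mk'

theorem isOpenMap_mk' : IsOpenMap (mk' ℝ : {v : Fin d → ℝ // v ≠ 0} → Proj d) := by
  intro U hU
  let smul (a : ℝˣ) (w : {v : Fin d → ℝ // v ≠ 0}) : {v : Fin d → ℝ // v ≠ 0} :=
    ⟨(a : ℝ) • (w : Fin d → ℝ), smul_ne_zero a.ne_zero w.2⟩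
  have hsat : mk' ℝ ⁻¹' (mk' ℝ '' U) = ⋃ a : ℝˣ, smul a ⁻¹' U := by
    ext w
    simp only [mem_preimage, mem_image, mem_iUnion, mk'_eq_mk, mk_eq_mk_iff]
    constructor
    · rintro ⟨u, hu, a, ha⟩
      exact ⟨a, by convert hu; exact Subtype.ext ha⟩
    · rintro ⟨a, ha⟩
      exact ⟨_, ha, a, rfl⟩
  rw [← isQuotientMap_mk'.isOpen_preimage, hsat]
  exact isOpen_iUnion fun a => hU.preimage (by fun_prop)

instance : SecondCountableTopology (Proj d) :=
  isQuotientMap_mk'.secondCountableTopology isOpenMap_mk'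

theorem isOpen_setOf_independent (n : ℕ) : IsOpen {x : Fin n → Proj d | Independent x} := by
  have hq : IsQuotientMap
      (Pi.map fun _ : Fin n => (mk' ℝ : {v : Fin d → ℝ // v ≠ 0} → Proj d)) :=
    (IsOpenQuotientMap.piMap fun _ => ⟨isQuotientMap_mk'.surjective,
      isQuotientMap_mk'.continuous, isOpenMap_mk'⟩).isQuotientMap
  have h : Pi.map (fun _ => mk' ℝ) ⁻¹' {x : Fin n → Proj d | Independent x} =
      (fun v i => (v i : Fin d → ℝ)) ⁻¹' {f | LinearIndependent ℝ f} := by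
    ext v
    exact independent_mk_iff fun i => (v i).2
  rw [← hq.isOpen_preimage, h]
  exact isOpen_setOfPred_linearIndependent.preimage (by fun_prop)

end Proj

section ProjSet

variable {d : ℕ}

open Projectivization

theorem projSet_bot : projSet (⊥ : Submodule ℝ (Fin d → ℝ)) = ∅ :=
  eq_empty_of_forall_notMem fun x hx => by
    simpa [finrank_submodule] using Submodule.finrank_mono hx

theorem isClosed_projSet (L : Submodule ℝ (Fin d → ℝ)) : IsClosed (projSet L) := by
  have h : mk' ℝ ⁻¹' projSet L = Subtype.val ⁻¹' (L : Set (Fin d → ℝ)) := by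
    ext v
    simp [projSet, submodule_mk, Submodule.span_singleton_le_iff_mem]
  rw [← Proj.isQuotientMap_mk'.isClosed_preimage, h]
  exact L.closed_of_finiteDimensional.preimage continuous_subtype_val

def independentTuples (L : Submodule ℝ (Fin d → ℝ)) (n : ℕ) : Set (Fin n → Proj d) :=
  {x | Independent x ∧ ∀ i, x i ∈ projSet L}

theorem measurableSet_independentTuples (L : Submodule ℝ (Fin d → ℝ)) (n : ℕ) :
    MeasurableSet (independentTuples L n) := by
  rw [independentTuples, ofPred_and]
  refine (Proj.isOpen_setOf_independent n).measurableSet.inter ?_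
  simpa only [Set.pi, mem_univ, true_implies] using
    MeasurableSet.univ_pi fun _ : Fin n => (isClosed_projSet L).measurableSet

theorem independentTuples_zero (L : Submodule ℝ (Fin d → ℝ)) : independentTuples L 0 = univ :=
  eq_univ_of_forall fun x => ⟨independent_of_isEmpty x, finZeroElim⟩

theorem snoc_mem_independentTuples_iff {L : Submodule ℝ (Fin d → ℝ)} {n : ℕ}
    {y : Fin n → Proj d} {t : Proj d} :
    (Fin.snoc y t : Fin (n + 1) → Proj d) ∈ independentTuples L (n + 1) ↔
      y ∈ independentTuples L n ∧ t ∈ projSet L \ projSet (⨆ i, (y i).submodule) := by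
  simp only [independentTuples, projSet, mem_ofPred_eq, Set.mem_sdiff, independent_snoc_iff,
    Fin.forall_fin_succ', Fin.snoc_castSucc, Fin.snoc_last]
  tauto

theorem iSup_submodule_eq_of_mem_independentTuples {L : Submodule ℝ (Fin d → ℝ)} {n : ℕ}
    {x : Fin n → Proj d} (hx : x ∈ independentTuples L n) (hL : finrank ℝ L = n) :
    ⨆ i, (x i).submodule = L :=
  Submodule.eq_of_le_of_finrank_le (iSup_le hx.2)
    (by rw [hL, hx.1.finrank_iSup_submodule, Fintype.card_fin])

theorem pairwiseDisjoint_independentTuples (n : ℕ) :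
    {L : Submodule ℝ (Fin d → ℝ) | finrank ℝ L = n}.PairwiseDisjoint
      (independentTuples · n) :=
  fun _ h₁ _ h₂ hne => disjoint_left.2 fun _ hx₁ hx₂ => hne <|
    (iSup_submodule_eq_of_mem_independentTuples hx₁ h₁).symm.trans
      (iSup_submodule_eq_of_mem_independentTuples hx₂ h₂)

variable (ν : Measure (Proj d))

theorem mul_pi_independentTuples_le [SigmaFinite ν] {L : Submodule ℝ (Fin d → ℝ)} {n : ℕ}
    {c : ℝ≥0∞}
    (hc : ∀ y ∈ independentTuples L n, c ≤ ν (projSet L \ projSet (⨆ i, (y i).submodule))) :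
    c * Measure.pi (fun _ => ν) (independentTuples L n) ≤
      Measure.pi (fun _ => ν) (independentTuples L (n + 1)) :=
  Measure.mul_pi_le_pi_of_le_snoc ν (measurableSet_independentTuples L _)
    (measurableSet_independentTuples L n) fun y hy =>
      (hc y hy).trans (measure_mono fun _ ht => snoc_mem_independentTuples_iff.2 ⟨hy, ht⟩)

theorem pi_independentTuples_ge [IsProbabilityMeasure ν] {L : Submodule ℝ (Fin d → ℝ)}
    {a δ : ℝ≥0∞} (ha : a ≤ ν (projSet L))
    (hδ : ∀ W ≤ L, finrank ℝ W < finrank ℝ L → ν (projSet W) ≤ δ) :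
    ∀ n < finrank ℝ L,
      a * (a - δ) ^ n ≤ Measure.pi (fun _ => ν) (independentTuples L (n + 1))
  | 0, _ => by
    simpa [independentTuples_zero] using mul_pi_independentTuples_le ν (n := 0) fun y _ => by
      simpa [iSup_of_empty, projSet_bot] using ha
  | n + 1, hn => calc
    a * (a - δ) ^ (n + 1) = (a - δ) * (a * (a - δ) ^ n) := by ring
    _ ≤ (a - δ) * Measure.pi (fun _ => ν) (independentTuples L (n + 1)) := by
        gcongr
        exact pi_independentTuples_ge ha hδ n (by omega)
    _ ≤ _ := mul_pi_independentTuples_le ν fun y hy => by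
        have hW : finrank ℝ (⨆ i, (y i).submodule : Submodule ℝ (Fin d → ℝ)) = n + 1 := by
          rw [hy.1.finrank_iSup_submodule, Fintype.card_fin]
        exact (tsub_le_tsub ha (hδ _ (iSup_le hy.2) (by omega))).trans le_measure_sdiff

theorem pi_independentTuples_ge_of_heavy [IsProbabilityMeasure ν] {k : ℕ} {ε : ℝ} (hε : 0 < ε)
    (hν : ∀ W : Submodule ℝ (Fin d → ℝ), finrank ℝ W = k → ν (projSet W) ≤ ENNReal.ofReal (ε / 4))
    {L : Submodule ℝ (Fin d → ℝ)} (hLk : finrank ℝ L = k + 1)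
    (hL : ENNReal.ofReal (ε / 2) ≤ ν (projSet L)) :
    ENNReal.ofReal (ε / 2 * (ε / 4) ^ k) ≤
      Measure.pi (fun _ => ν) (independentTuples L (k + 1)) := by
  have hδ : ∀ W ≤ L, finrank ℝ W < finrank ℝ L → ν (projSet W) ≤ ENNReal.ofReal (ε / 4) := by
    intro W hWL hW
    obtain ⟨W', hWW', -, hW'⟩ :=
      Submodule.exists_finrank_eq_of_le hWL (j := k) (by omega) (by omega)
    exact (measure_mono fun x hx => hx.trans hWW').trans (hν W' hW')
  have hsub : ENNReal.ofReal (ε / 2) - ENNReal.ofReal (ε / 4) = ENNReal.ofReal (ε / 4) := by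
    rw [← ENNReal.ofReal_sub _ (by positivity)]
    ring_nf
  have := pi_independentTuples_ge ν hL hδ k (by omega)
  rwa [hsub, ← ENNReal.ofReal_pow (by positivity), ← ENNReal.ofReal_mul (by positivity)] at this

end ProjSet

theorem Nat.le_floor_one_div_of_mul_ofReal_le_one {N : ℕ} {r : ℝ} (hr : 0 < r)
    (h : (N : ℝ≥0∞) * ENNReal.ofReal r ≤ 1) : N ≤ ⌊1 / r⌋₊ := by
  rw [← ENNReal.ofReal_natCast, ← ENNReal.ofReal_mul N.cast_nonneg, ENNReal.ofReal_le_one] at h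
  exact Nat.le_floor ((le_div_iff₀ hr).2 h)

theorem counting_heavy_subspaces_general
    (d m : ℕ) (hm : 2 ≤ m)
    (ε : ℝ) (hε : 0 < ε) (ν : ProbabilityMeasure (Proj d))
    (hν : ∀ Lsub : Submodule ℝ (Fin d → ℝ), Module.finrank ℝ Lsub = m - 1 →
      (ν : Measure (Proj d)) (projSet Lsub) ≤ ENNReal.ofReal (ε / 4)) :
    {L' : Submodule ℝ (Fin d → ℝ) | Module.finrank ℝ L' = m ∧
        ENNReal.ofReal (ε / 2) ≤ (ν : Measure (Proj d)) (projSet L')}.Finite ∧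
      {L' : Submodule ℝ (Fin d → ℝ) | Module.finrank ℝ L' = m ∧
        ENNReal.ofReal (ε / 2) ≤ (ν : Measure (Proj d)) (projSet L')}.ncard ≤
          Nat.floor ((2 : ℝ) ^ (2 * m - 1) / ε ^ m) := by
  obtain ⟨k, rfl⟩ : ∃ k, m = k + 1 := ⟨m - 1, by omega⟩
  set S := {L' : Submodule ℝ (Fin d → ℝ) | finrank ℝ L' = k + 1 ∧
    ENNReal.ofReal (ε / 2) ≤ (ν : Measure (Proj d)) (projSet L')}
  have hr : 0 < ε / 2 * (ε / 4) ^ k := by positivity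
  have hS : ∀ L ∈ S, ENNReal.ofReal (ε / 2 * (ε / 4) ^ k) ≤
      Measure.pi (fun _ => (ν : Measure (Proj d))) (independentTuples L (k + 1)) :=
    fun L hL => pi_independentTuples_ge_of_heavy _ hε (by simpa using hν) hL.1 hL.2
  have hdisj : S.PairwiseDisjoint (independentTuples · (k + 1)) :=
    (pairwiseDisjoint_independentTuples (k + 1)).subset fun L hL => hL.1
  have hmeas := fun L (_ : L ∈ S) => measurableSet_independentTuples L (k + 1)
  have hfin : S.Finite := hdisj.finite_of_le_measure hmeas (ENNReal.ofReal_pos.2 hr).ne' hS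
  have hbound : (2 : ℝ) ^ (2 * (k + 1) - 1) / ε ^ (k + 1) = 1 / (ε / 2 * (ε / 4) ^ k) := by
    rw [show 2 * (k + 1) - 1 = 2 * k + 1 by omega, pow_succ, pow_mul, pow_succ ε, div_pow]
    field_simp
    norm_num
  refine ⟨hfin, hbound ▸ Nat.le_floor_one_div_of_mul_ofReal_le_one hr ?_⟩
  simpa using hdisj.ncard_mul_le_measure_univ hfin hmeas hS

/-- **Counting heavy subspaces** (Lemma 4.2).
If every `(m-1)`-dimensional subspace carries `ν`-measure at most `ε/4`, then there are at
most `⌊2^{2m-1} / ε^m⌋` subspaces `L' ∈ Gr(m,d)` with `ν([L']) ≥ ε/2`. -/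
theorem counting_heavy_subspaces
    (d m : ℕ) (hm : 2 ≤ m) (hmd : m ≤ d - 1)
    (ε : ℝ) (hε : 0 < ε) (ν : ProbabilityMeasure (Proj d))
    (hν : ∀ Lsub : Submodule ℝ (Fin d → ℝ), Module.finrank ℝ Lsub = m - 1 →
      (ν : Measure (Proj d)) (projSet Lsub) ≤ ENNReal.ofReal (ε / 4)) :
    {L' : Submodule ℝ (Fin d → ℝ) | Module.finrank ℝ L' = m ∧
        ENNReal.ofReal (ε / 2) ≤ (ν : Measure (Proj d)) (projSet L')}.Finite ∧
      {L' : Submodule ℝ (Fin d → ℝ) | Module.finrank ℝ L' = m ∧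
        ENNReal.ofReal (ε / 2) ≤ (ν : Measure (Proj d)) (projSet L')}.ncard ≤
          Nat.floor ((2 : ℝ) ^ (2 * m - 1) / ε ^ m) :=
  counting_heavy_subspaces_general d m hm ε hε ν hν
end
end

section
/- Near-conservation of the squared atom weights forces alignment of random images. For any ε > 0 there exists δ > 0 such that the following holds for any compact metric space X, any Borel probability measure μ on Homeo(X), and any Borel probability measure ν on X. Let ν' = μ*ν, let E = Σ_x ν({x})² and E' = Σ_y ν'({y})² be the sums of squared atom weights of ν and ν', and let ρ = Σ_x ν({x})² δ_x and ρ' = Σ_y ν'({y})² δ_y (sums over the atoms of ν and ν' respectively). If E − E' < δ E, then with μ-probability at least 1−ε (over f ∼ μ) the total variation distance ‖f_*ρ − ρ'‖_TV does not exceed ε E. -/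
open MeasureTheory
open scoped ENNReal

noncomputable section

/-- Topology of uniform convergence (= compact-open topology) on `Homeo(X)`. -/
instance homeoTopologicalSpace {X : Type*} [TopologicalSpace X] :
    TopologicalSpace (X ≃ₜ X) :=
  TopologicalSpace.induced (fun f : X ≃ₜ X => (f : C(X, X))) inferInstance

instance homeoMeasurableSpace {X : Type*} [TopologicalSpace X] :
    MeasurableSpace (X ≃ₜ X) := borel _

instance homeoBorelSpace {X : Type*} [TopologicalSpace X] :
    BorelSpace (X ≃ₜ X) := ⟨rfl⟩

/-- `μ * ν = ∫ f_* ν dμ(f)`: the law of `f x` with `f ∼ μ`, `x ∼ ν` independent. -/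
def mconv {X : Type*} [TopologicalSpace X] [MeasurableSpace X]
    (μ : Measure (X ≃ₜ X)) (ν : Measure X) : Measure X :=
  μ.bind fun f => ν.map f

/-- The maximal weight of an atom of a measure. -/
def maxAtom {X : Type*} [MeasurableSpace X] (ν : Measure X) : ℝ≥0∞ :=
  ⨆ x : X, ν {x}

/-- Iterated convolution `μₙ * ⋯ * μ₁ * ν`. -/
def iterConv {X : Type*} [TopologicalSpace X] [MeasurableSpace X]
    (μ : ℕ → ProbabilityMeasure (X ≃ₜ X)) (ν : Measure X) : ℕ → Measure X
  | 0 => ν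
  | n + 1 => mconv (μ n : Measure (X ≃ₜ X)) (iterConv μ ν n)

open scoped Classical in
/-- Relative entropy (Kullback–Leibler divergence) `h(ν | ν')`. -/
def relEnt {X : Type*} [MeasurableSpace X] (ν ν' : Measure X) : ℝ≥0∞ :=
  if ν ≪ ν' ∧ Integrable (fun x => Real.log (ν.rnDeriv ν' x).toReal) ν
  then ENNReal.ofReal (∫ x, Real.log (ν.rnDeriv ν' x).toReal ∂ν)
  else ⊤

/-- The Furstenberg entropy `Φ_μ(ν) = ∫ h(f_*ν | μ*ν) dμ(f)`. -/
def furstEnt {X : Type*} [TopologicalSpace X] [MeasurableSpace X]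
    (μ : Measure (X ≃ₜ X)) (ν : Measure X) : ℝ≥0∞ :=
  ∫⁻ f, relEnt (ν.map f) (mconv μ ν) ∂μ

/-- The conditional version `Φ_μ(ν | ν') = ∫ h(f_*ν | ν') dμ(f)`. -/
def furstEntCond {X : Type*} [TopologicalSpace X] [MeasurableSpace X]
    (μ : Measure (X ≃ₜ X)) (ν ν' : Measure X) : ℝ≥0∞ :=
  ∫⁻ f, relEnt (ν.map f) ν' ∂μ

/-- The law of `f ∘ g`, where `f ∼ μ'` and `g ∼ μ` independently. -/
def hconv {X : Type*} [TopologicalSpace X] (μ' μ : Measure (X ≃ₜ X)) :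
    Measure (X ≃ₜ X) :=
  (μ'.prod μ).map fun p => p.2.trans p.1

/-- Total variation distance between two (finite Borel) measures. -/
def tvDist {X : Type*} [MeasurableSpace X] (α β : Measure X) : ℝ≥0∞ :=
  (⨆ (s : Set X) (_ : MeasurableSet s), (α s - β s)) +
    (⨆ (s : Set X) (_ : MeasurableSet s), (β s - α s))

/-- Sum of squares of the weights of atoms. -/
def sqAtomMass {X : Type*} [MeasurableSpace X] (ν : Measure X) : ℝ≥0∞ :=
  ∑' x : X, (ν {x}) ^ 2

/-- The measure `Σ_x ν({x})² δ_x`. -/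
def sqAtomMeasure {X : Type*} [MeasurableSpace X] (ν : Measure X) : Measure X :=
  Measure.sum fun x : X => (ν {x}) ^ 2 • Measure.dirac x


/-!
Write `a_f y = (f_*ν){y}` and `b y = ν'{y} = ∫ a_f y dμ(f)`. A homeomorphism permutes the atoms,
so `Σ_y (a_f y)² = E` for every `f`. Summing the variance identity
`∫ (a_f y - b y)² dμ(f) + (b y)² = ∫ (a_f y)² dμ(f)` over the countably many atoms of `ν'` (off
which `b` vanishes) gives `∫ S_f dμ(f) = E - E'` for `S_f = Σ_y (a_f y - b y)²`, so by Markov's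
inequality `S_f < ε² E / 4` outside a set of measure at most `ε` as soon as `E - E' < (ε³/4) E`.
For such `f`, Cauchy–Schwarz gives
`‖f_*ρ - ρ'‖_TV ≤ Σ_y |a_f y - b y| (a_f y + b y) ≤ (S_f · 2 (E + E'))^(1/2) ≤ ε E`.
-/

open ProbabilityTheory

theorem ENNReal.tsub_add_tsub_eq_enorm {a b : ℝ≥0∞} (ha : a ≠ ∞) (hb : b ≠ ∞) :
    (a - b) + (b - a) = ‖a.toReal - b.toReal‖ₑ := by
  wlog h : a ≤ b generalizing a b
  · rw [add_comm, ← enorm_neg, neg_sub]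
    exact this hb ha (le_of_not_ge h)
  rw [tsub_eq_zero_of_le h, zero_add, ← enorm_neg, neg_sub, ← ENNReal.toReal_sub_of_le h hb,
    Real.enorm_of_nonneg ENNReal.toReal_nonneg, ENNReal.ofReal_toReal (by finiteness)]

theorem ENNReal.add_sq_le (a b : ℝ≥0∞) : (a + b) ^ 2 ≤ 2 * (a ^ 2 + b ^ 2) := by
  have h := ENNReal.rpow_add_le_mul_rpow_add_rpow a b one_le_two
  norm_num [ENNReal.rpow_two] at h
  exact h

theorem ENNReal.tsum_tsub_tsum_le {ι : Type*} (f g : ι → ℝ≥0∞) :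
    ∑' i, f i - ∑' i, g i ≤ ∑' i, (f i - g i) := by
  rw [tsub_le_iff_right, ← ENNReal.tsum_add]
  exact ENNReal.tsum_le_tsum fun i => le_tsub_add

theorem ENNReal.tsum_mul_sq_le {ι : Type*} (f g : ι → ℝ≥0∞) :
    (∑' i, f i * g i) ^ 2 ≤ (∑' i, f i ^ 2) * ∑' i, g i ^ 2 := by
  let _ : MeasurableSpace ι := ⊤
  have h := ENNReal.lintegral_mul_le_Lp_mul_Lq Measure.count Real.HolderConjugate.two_two
    (f := f) (g := g) measurable_from_top.aemeasurable measurable_from_top.aemeasurable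
  simp only [lintegral_count, Pi.mul_apply, ENNReal.rpow_two] at h
  calc (∑' i, f i * g i) ^ 2
      ≤ ((∑' i, f i ^ 2) ^ (1 / 2 : ℝ) * (∑' i, g i ^ 2) ^ (1 / 2 : ℝ)) ^ 2 := by gcongr
    _ = (∑' i, f i ^ 2) * ∑' i, g i ^ 2 := by
      rw [mul_pow, ← ENNReal.rpow_natCast, ← ENNReal.rpow_natCast, ← ENNReal.rpow_mul,
        ← ENNReal.rpow_mul]
      norm_num

theorem Real.enorm_sq_eq_ofReal (x : ℝ) : ‖x‖ₑ ^ 2 = ENNReal.ofReal (x ^ 2) := by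
  rw [Real.enorm_eq_ofReal_abs, ← ENNReal.ofReal_pow (abs_nonneg x), sq_abs]

theorem ProbabilityTheory.evariance_add_enorm_integral_sq {Ω : Type*} [MeasurableSpace Ω]
    {μ : Measure Ω} [IsProbabilityMeasure μ] {X : Ω → ℝ} (hX : MemLp X 2 μ) :
    evariance X μ + ‖μ[X]‖ₑ ^ 2 = ∫⁻ ω, ‖X ω‖ₑ ^ 2 ∂μ := by
  rw [← ofReal_variance hX, Real.enorm_sq_eq_ofReal,
    ← ENNReal.ofReal_add (variance_nonneg X μ) (sq_nonneg _), variance_eq_sub hX, sub_add_cancel,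
    Pi.pow_def,
    ofReal_integral_eq_lintegral_ofReal hX.integrable_sq (ae_of_all _ fun ω => sq_nonneg _)]
  simp_rw [Real.enorm_sq_eq_ofReal]

def sqAtomDist {X : Type*} [MeasurableSpace X] (α β : Measure X) : ℝ≥0∞ :=
  ∑' y, ‖α.real {y} - β.real {y}‖ₑ ^ 2

section Atoms

variable {X : Type*} [MeasurableSpace X]

theorem MeasureTheory.Measure.exists_countable_forall_measureReal_singleton_eq_zero
    [MeasurableSingletonClass X] (ρ : Measure X) [SFinite ρ] :
    ∃ T : Set X, T.Countable ∧ ∀ y ∉ T, ρ.real {y} = 0 :=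
  ⟨{y | 0 < ρ {y}}, Measure.countable_meas_pos_of_disjoint_iUnion (μ := ρ)
    (fun y => measurableSet_singleton y) (fun _ _ hyz => Set.disjoint_singleton.2 hyz),
    fun y hy => by simp_all [measureReal_def]⟩

theorem sqAtomMass_le_measure_univ_sq [MeasurableSingletonClass X] (ρ : Measure X) :
    sqAtomMass ρ ≤ ρ Set.univ ^ 2 := by
  calc sqAtomMass ρ ≤ ∑' x, ρ Set.univ * ρ {x} :=
        ENNReal.tsum_le_tsum fun x => by
          rw [sq]; exact mul_le_mul_left (measure_mono (μ := ρ) (Set.subset_univ _)) _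
    _ ≤ ρ Set.univ ^ 2 := by
      rw [ENNReal.tsum_mul_left, sq]
      gcongr
      refine (tsum_meas_le_meas_iUnion_of_disjoint ρ (fun x => measurableSet_singleton x)
        fun _ _ hxy => Set.disjoint_singleton.2 hxy).trans_eq ?_
      rw [Set.iUnion_of_singleton]

theorem sqAtomMass_ne_top [MeasurableSingletonClass X] (ρ : Measure X) [IsFiniteMeasure ρ] :
    sqAtomMass ρ ≠ ∞ :=
  ((sqAtomMass_le_measure_univ_sq ρ).trans_lt (by finiteness)).ne

theorem sqAtomMass_eq_tsum_enorm_sq (ρ : Measure X) [IsFiniteMeasure ρ] :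
    sqAtomMass ρ = ∑' y, ‖ρ.real {y}‖ₑ ^ 2 := by
  unfold sqAtomMass
  congr! with y
  rw [Real.enorm_of_nonneg measureReal_nonneg, ofReal_measureReal]

theorem sqAtomMass_eq_tsum_add_tsum_compl (ρ : Measure X) [IsFiniteMeasure ρ] (T : Set X) :
    sqAtomMass ρ = ∑' y : T, ‖ρ.real {(y : X)}‖ₑ ^ 2 + ∑' y : ↥Tᶜ, ‖ρ.real {(y : X)}‖ₑ ^ 2 := by
  rw [sqAtomMass_eq_tsum_enorm_sq, ← ENNReal.summable.tsum_add_tsum_compl (s := T) ENNReal.summable]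

theorem sqAtomDist_eq_tsum_add_tsum_compl (α ρ : Measure X) {T : Set X}
    (hT : ∀ y ∉ T, ρ.real {y} = 0) :
    sqAtomDist α ρ = ∑' y : T, ‖α.real {(y : X)} - ρ.real {(y : X)}‖ₑ ^ 2 +
      ∑' y : ↥Tᶜ, ‖α.real {(y : X)}‖ₑ ^ 2 := by
  rw [sqAtomDist, ← ENNReal.summable.tsum_add_tsum_compl ENNReal.summable]
  congr 1
  exact tsum_congr fun y => by rw [hT y y.2, sub_zero]

theorem map_measurableEquiv_apply_singleton {Y : Type*} [MeasurableSpace Y] (ν : Measure X)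
    (e : X ≃ᵐ Y) (x : X) : ν.map e {e x} = ν {x} := by
  rw [e.map_apply, ← Set.image_singleton, e.preimage_image]

theorem sqAtomMeasure_map_measurableEquiv {Y : Type*} [MeasurableSpace Y] (ν : Measure X)
    (e : X ≃ᵐ Y) : (sqAtomMeasure ν).map e = sqAtomMeasure (ν.map e) := by
  rw [sqAtomMeasure, Measure.map_sum e.measurable.aemeasurable, sqAtomMeasure]
  conv_rhs => rw [← Measure.sum_comp_equiv e.toEquiv]
  congr 1
  ext1 x
  simp [Measure.map_smul, Measure.map_dirac' e.measurable, map_measurableEquiv_apply_singleton]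

theorem sqAtomMass_map_measurableEquiv {Y : Type*} [MeasurableSpace Y] (ν : Measure X)
    (e : X ≃ᵐ Y) : sqAtomMass (ν.map e) = sqAtomMass ν := by
  rw [sqAtomMass, ← e.toEquiv.tsum_eq]
  simp [sqAtomMass, map_measurableEquiv_apply_singleton]

theorem tvDist_sum_smul_dirac_le (p q : X → ℝ≥0∞) :
    tvDist (Measure.sum fun y => p y • Measure.dirac y)
        (Measure.sum fun y => q y • Measure.dirac y) ≤
      ∑' y, ((p y - q y) + (q y - p y)) := by
  have key : ∀ p q : X → ℝ≥0∞, ⨆ (s : Set X) (_ : MeasurableSet s),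
      ((Measure.sum fun y => p y • Measure.dirac y) s -
        (Measure.sum fun y => q y • Measure.dirac y) s) ≤ ∑' y, (p y - q y) := by
    intro p q
    refine iSup₂_le fun s hs => ?_
    simp only [Measure.sum_apply _ hs, Measure.smul_apply, Measure.dirac_apply' _ hs, smul_eq_mul]
    refine (ENNReal.tsum_tsub_tsum_le _ _).trans (ENNReal.tsum_le_tsum fun y => ?_)
    by_cases hy : y ∈ s <;> simp [hy]
  rw [ENNReal.tsum_add]
  exact add_le_add (key p q) (key q p)

theorem tvDist_sqAtomMeasure_sq_le (α β : Measure X) [IsFiniteMeasure α] [IsFiniteMeasure β] :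
    tvDist (sqAtomMeasure α) (sqAtomMeasure β) ^ 2 ≤
      sqAtomDist α β * (2 * (sqAtomMass α + sqAtomMass β)) := by
  have hterm : ∀ y, (α {y} ^ 2 - β {y} ^ 2) + (β {y} ^ 2 - α {y} ^ 2) =
      ‖α.real {y} - β.real {y}‖ₑ * (α {y} + β {y}) := by
    intro y
    rw [ENNReal.tsub_add_tsub_eq_enorm (by finiteness) (by finiteness), ENNReal.toReal_pow,
      ENNReal.toReal_pow, ← measureReal_def, ← measureReal_def, sq_sub_sq, enorm_mul,
      Real.enorm_of_nonneg (by positivity),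
      ENNReal.ofReal_add measureReal_nonneg measureReal_nonneg, ofReal_measureReal,
      ofReal_measureReal, mul_comm]
  calc tvDist (sqAtomMeasure α) (sqAtomMeasure β) ^ 2
      ≤ (∑' y, ‖α.real {y} - β.real {y}‖ₑ * (α {y} + β {y})) ^ 2 := by
        gcongr
        exact (tvDist_sum_smul_dirac_le _ _).trans_eq (tsum_congr hterm)
    _ ≤ sqAtomDist α β * ∑' y, (α {y} + β {y}) ^ 2 := ENNReal.tsum_mul_sq_le _ _
    _ ≤ sqAtomDist α β * (2 * (sqAtomMass α + sqAtomMass β)) := by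
        gcongr
        rw [sqAtomMass, sqAtomMass, ← ENNReal.tsum_add, ← ENNReal.tsum_mul_left]
        exact ENNReal.tsum_le_tsum fun y => ENNReal.add_sq_le _ _

theorem tvDist_sqAtomMeasure_le_of_sqAtomDist_le {α β : Measure X} [IsFiniteMeasure α]
    [IsFiniteMeasure β] (hαβ : sqAtomMass β ≤ sqAtomMass α) {ε : ℝ} (hε : 0 ≤ ε)
    (h : sqAtomDist α β ≤ ENNReal.ofReal (ε ^ 2 / 4) * sqAtomMass α) :
    tvDist (sqAtomMeasure α) (sqAtomMeasure β) ≤ ENNReal.ofReal ε * sqAtomMass α := by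
  refine (ENNReal.pow_le_pow_left_iff two_ne_zero).1 ?_
  calc tvDist (sqAtomMeasure α) (sqAtomMeasure β) ^ 2
      ≤ ENNReal.ofReal (ε ^ 2 / 4) * sqAtomMass α * (2 * (sqAtomMass α + sqAtomMass α)) := by
        grw [tvDist_sqAtomMeasure_sq_le, h, hαβ]
    _ = ENNReal.ofReal (ε ^ 2 / 4 * 4) * sqAtomMass α ^ 2 := by
        rw [ENNReal.ofReal_mul (by positivity), ENNReal.ofReal_ofNat]
        ring
    _ = (ENNReal.ofReal ε * sqAtomMass α) ^ 2 := by
        rw [div_mul_cancel₀ _ four_ne_zero, ENNReal.ofReal_pow hε, mul_pow]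

end Atoms

section Kernel

variable {Ω X : Type*} [MeasurableSpace Ω] [MeasurableSpace X] [MeasurableSingletonClass X]

theorem measurable_sqAtomDist (κ : Kernel Ω X) [IsFiniteKernel κ] (ρ : Measure X)
    [IsFiniteMeasure ρ] (hκ : Measurable fun ω => sqAtomMass (κ ω)) :
    Measurable fun ω => sqAtomDist (κ ω) ρ := by
  obtain ⟨T, hTc, hT⟩ := ρ.exists_countable_forall_measureReal_singleton_eq_zero
  have : Countable T := hTc.to_subtype
  have ha : ∀ y, Measurable fun ω => (κ ω).real {y} := fun y =>
    (κ.measurable_coe (measurableSet_singleton y)).ennreal_toReal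
  -- The `tsum` over all of `X` is uncountable; outside the countably many atoms of `ρ` it is
  -- recovered from `sqAtomMass (κ ω)`.
  have hsplit : ∀ ω, sqAtomDist (κ ω) ρ = ∑' y : T, ‖(κ ω).real {(y : X)} - ρ.real {(y : X)}‖ₑ ^ 2
      + (sqAtomMass (κ ω) - ∑' y : T, ‖(κ ω).real {(y : X)}‖ₑ ^ 2) := fun ω => by
    have hfin := sqAtomMass_ne_top (κ ω)
    rw [sqAtomMass_eq_tsum_add_tsum_compl _ T] at hfin ⊢
    rw [sqAtomDist_eq_tsum_add_tsum_compl _ _ hT,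
      ENNReal.add_sub_cancel_left (ENNReal.add_ne_top.1 hfin).1]
  simp_rw [hsplit]
  exact (Measurable.tsum fun y : T => ((ha y).sub_const _).enorm.pow_const 2).add
    (hκ.sub (Measurable.tsum fun y : T => (ha y).enorm.pow_const 2))

theorem lintegral_sqAtomDist_add_sqAtomMass_comp (μ : Measure Ω) [IsProbabilityMeasure μ]
    (κ : Kernel Ω X) [IsFiniteKernel κ] :
    ∫⁻ ω, sqAtomDist (κ ω) (κ ∘ₘ μ) ∂μ + sqAtomMass (κ ∘ₘ μ) = ∫⁻ ω, sqAtomMass (κ ω) ∂μ := by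
  set ν' := κ ∘ₘ μ
  obtain ⟨T, hTc, hT⟩ := ν'.exists_countable_forall_measureReal_singleton_eq_zero
  have : Countable T := hTc.to_subtype
  set a : X → Ω → ℝ := fun y ω => (κ ω).real {y}
  have ha : ∀ y, Measurable (a y) := fun y =>
    (κ.measurable_coe (measurableSet_singleton y)).ennreal_toReal
  have hmean : ∀ y, μ[a y] = ν'.real {y} := fun y => by
    change ∫ ω, (κ ω {y}).toReal ∂μ = _
    rw [integral_toReal (κ.measurable_coe (measurableSet_singleton y)).aemeasurable
      (ae_of_all _ fun ω => measure_lt_top _ _), measureReal_def,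
      Measure.bind_apply (measurableSet_singleton y) κ.measurable.aemeasurable]
  have hmemLp : ∀ y, MemLp (a y) 2 μ := fun y =>
    MemLp.of_bound (ha y).aestronglyMeasurable κ.bound.toReal (ae_of_all _ fun ω => by
      rw [Real.norm_of_nonneg measureReal_nonneg]
      exact ENNReal.toReal_mono κ.bound_ne_top (κ.measure_le_bound ω _))
  have hcoord : ∀ (c : ℝ) (y : X), Measurable fun ω => ‖a y ω - c‖ₑ ^ 2 := fun c y =>
    ((ha y).sub_const c).enorm.pow_const 2
  have hcoord₀ : ∀ y : X, Measurable fun ω => ‖a y ω‖ₑ ^ 2 := fun y => (ha y).enorm.pow_const 2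
  have hMass' : sqAtomMass ν' = ∑' y : T, ‖μ[a y]‖ₑ ^ 2 := by
    rw [sqAtomMass_eq_tsum_add_tsum_compl _ T,
      ENNReal.tsum_eq_zero.2 fun y : ↥Tᶜ => by simp [hT y y.2], add_zero]
    simp_rw [hmean]
  have hVar : ∫⁻ ω, ∑' y : T, ‖a y ω - ν'.real {(y : X)}‖ₑ ^ 2 ∂μ =
      ∑' y : T, evariance (a y) μ := by
    rw [lintegral_tsum fun y => (hcoord _ _).aemeasurable]
    simp_rw [evariance, hmean]
  rw [hMass']
  simp_rw [sqAtomDist_eq_tsum_add_tsum_compl _ _ hT, sqAtomMass_eq_tsum_add_tsum_compl _ T]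
  rw [lintegral_add_left' (Measurable.tsum fun y : T => hcoord _ _).aemeasurable,
    lintegral_add_left' (Measurable.tsum fun y : T => hcoord₀ y).aemeasurable, hVar,
    lintegral_tsum fun y : T => (hcoord₀ y).aemeasurable, add_right_comm, ← ENNReal.tsum_add]
  simp_rw [evariance_add_enorm_integral_sq (hmemLp _)]

theorem sqAtomMass_comp_le (μ : Measure Ω) [IsProbabilityMeasure μ] (κ : Kernel Ω X)
    [IsFiniteKernel κ] {E : ℝ≥0∞} (hE : ∀ ω, sqAtomMass (κ ω) = E) :
    sqAtomMass (κ ∘ₘ μ) ≤ E :=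
  le_add_self.trans_eq <| (lintegral_sqAtomDist_add_sqAtomMass_comp μ κ).trans (by simp [hE])

theorem ofReal_one_sub_le_measure_sqAtomDist_comp_lt (μ : Measure Ω) [IsProbabilityMeasure μ]
    (κ : Kernel Ω X) [IsFiniteKernel κ] {E : ℝ≥0∞} (hE : ∀ ω, sqAtomMass (κ ω) = E)
    {ε : ℝ} {c : ℝ≥0∞} (hc : c ≠ ∞) (h : E - sqAtomMass (κ ∘ₘ μ) < ENNReal.ofReal ε * c) :
    ENNReal.ofReal (1 - ε) ≤ μ {ω | sqAtomDist (κ ω) (κ ∘ₘ μ) < c} := by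
  have hS := measurable_sqAtomDist κ (κ ∘ₘ μ) (by simp only [hE]; exact measurable_const)
  obtain ⟨hε, hc0⟩ := ENNReal.mul_pos_iff.1 (pos_of_gt h)
  have hbad : μ {ω | c ≤ sqAtomDist (κ ω) (κ ∘ₘ μ)} ≤ ENNReal.ofReal ε := by
    refine (ENNReal.mul_le_mul_iff_right hc0.ne' hc).1 (le_of_lt ?_)
    refine lt_of_le_of_lt ?_ (h.trans_eq (mul_comm _ _))
    refine ENNReal.le_sub_of_add_le_right (sqAtomMass_ne_top _) ?_
    calc c * μ {ω | c ≤ sqAtomDist (κ ω) (κ ∘ₘ μ)} + sqAtomMass (κ ∘ₘ μ)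
        ≤ ∫⁻ ω, sqAtomDist (κ ω) (κ ∘ₘ μ) ∂μ + sqAtomMass (κ ∘ₘ μ) := by
          gcongr; exact mul_meas_ge_le_lintegral₀ hS.aemeasurable c
      _ = E := by rw [lintegral_sqAtomDist_add_sqAtomMass_comp]; simp [hE]
  calc ENNReal.ofReal (1 - ε) = 1 - ENNReal.ofReal ε := by
        rw [ENNReal.ofReal_sub _ (ENNReal.ofReal_pos.1 hε).le, ENNReal.ofReal_one]
    _ ≤ 1 - μ {ω | c ≤ sqAtomDist (κ ω) (κ ∘ₘ μ)} := tsub_le_tsub_left hbad 1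
    _ = μ {ω | sqAtomDist (κ ω) (κ ∘ₘ μ) < c} := by
        rw [← prob_compl_eq_one_sub (measurableSet_le measurable_const hS)]
        simp only [Set.compl_ofPred, not_le]

end Kernel

theorem continuous_homeomorph_eval {X : Type*} [TopologicalSpace X] [LocallyCompactSpace X] :
    Continuous fun p : (X ≃ₜ X) × X => p.1 p.2 :=
  (continuous_eval (F := C(X, X))).comp
    ((continuous_induced_dom (f := fun f : X ≃ₜ X => (f : C(X, X)))).prodMap continuous_id)

theorem measurable_map_homeomorph {X : Type*} [TopologicalSpace X] [LocallyCompactSpace X]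
    [SecondCountableTopology X] [MeasurableSpace X] [BorelSpace X] (ν : Measure X) [SFinite ν] :
    Measurable fun f : X ≃ₜ X => ν.map f := by
  refine Measure.measurable_of_measurable_coe _ fun s hs => ?_
  convert measurable_measure_prodMk_left (ν := ν)
    (hs.preimage continuous_homeomorph_eval.measurable) using 2 with f
  exact Measure.map_apply f.continuous.measurable hs

def homeomorphMapKernel {X : Type*} [TopologicalSpace X] [LocallyCompactSpace X]
    [SecondCountableTopology X] [MeasurableSpace X] [BorelSpace X] (ν : Measure X) [SFinite ν] :
    Kernel (X ≃ₜ X) X :=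
  ⟨fun f => ν.map f, measurable_map_homeomorph ν⟩

instance {X : Type*} [TopologicalSpace X] [LocallyCompactSpace X] [SecondCountableTopology X]
    [MeasurableSpace X] [BorelSpace X] (ν : Measure X) [IsProbabilityMeasure ν] :
    IsMarkovKernel (homeomorphMapKernel ν) :=
  ⟨fun f => Measure.isProbabilityMeasure_map f.continuous.measurable.aemeasurable⟩

/-- **Near-conservation of the squared atom weights forces alignment of random images**
(Lemma 4.1). For any `ε > 0` there is `δ > 0` such that for any compact metric space `X`,
any probability measure `μ` on `Homeo(X)` and any probability measure `ν` on `X`: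
if `E - E' < δ E`, then with `μ`-probability at least `1 - ε` the total variation distance
`‖f_*ρ - ρ'‖_TV` is at most `ε E`. -/
theorem squared_atoms_alignment :
    ∀ ε : ℝ, 0 < ε → ∃ δ : ℝ, 0 < δ ∧
      ∀ (X : Type) [MetricSpace X] [CompactSpace X] [MeasurableSpace X] [BorelSpace X],
        ∀ (μ : ProbabilityMeasure (X ≃ₜ X)) (ν : ProbabilityMeasure X),
          sqAtomMass (ν : Measure X) -
              sqAtomMass (mconv (μ : Measure (X ≃ₜ X)) (ν : Measure X)) <
            ENNReal.ofReal δ * sqAtomMass (ν : Measure X) →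
          ENNReal.ofReal (1 - ε) ≤
            (μ : Measure (X ≃ₜ X)) {f : X ≃ₜ X |
              tvDist ((sqAtomMeasure (ν : Measure X)).map f)
                  (sqAtomMeasure (mconv (μ : Measure (X ≃ₜ X)) (ν : Measure X))) ≤
                ENNReal.ofReal ε * sqAtomMass (ν : Measure X)} := by
  intro ε hε
  refine ⟨ε ^ 3 / 4, by positivity, fun X _ _ _ _ μ ν hδ => ?_⟩
  set κ := homeomorphMapKernel (ν : Measure X)
  set E := sqAtomMass (ν : Measure X)
  have hκ : ∀ f, sqAtomMass (κ f) = E := fun f =>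
    sqAtomMass_map_measurableEquiv _ f.toMeasurableEquiv
  have hconv : mconv (μ : Measure (X ≃ₜ X)) ν = κ ∘ₘ (μ : Measure (X ≃ₜ X)) := rfl
  rw [hconv] at hδ ⊢
  calc ENNReal.ofReal (1 - ε)
      ≤ (μ : Measure (X ≃ₜ X))
          {f | sqAtomDist (κ f) (κ ∘ₘ (μ : Measure (X ≃ₜ X))) <
            ENNReal.ofReal (ε ^ 2 / 4) * E} := by
        refine ofReal_one_sub_le_measure_sqAtomDist_comp_lt _ κ hκ
          (ENNReal.mul_ne_top ENNReal.ofReal_ne_top (sqAtomMass_ne_top _)) (hδ.trans_eq ?_)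
        rw [← mul_assoc, ← ENNReal.ofReal_mul hε.le]
        ring_nf
    _ ≤ _ := measure_mono fun f hf => by
        change tvDist ((sqAtomMeasure (ν : Measure X)).map f.toMeasurableEquiv) _ ≤ _
        rw [sqAtomMeasure_map_measurableEquiv, ← hκ f]
        exact tvDist_sqAtomMeasure_le_of_sqAtomDist_le
          ((sqAtomMass_comp_le _ κ hκ).trans_eq (hκ f).symm) hε.le (hf.le.trans_eq (by rw [hκ f]))
end
end
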